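/- arXiv:1612.02162 — 2 statements merged into one kernel-verified Lean document; each statement's English description precedes it below -/
import Mathlib

section
/- Let A be an n×n real matrix with a real eigenpair (λ, u), i.e., Au = λu and |u|² = 1 with λ ∈ ℝ and u ∈ ℝⁿ. If the (n+1)×(n+1) bordered matrix J(u,λ) = [[A−λI, −u],[−2uᵀ, 0]] is nonsingular, then λ is a simple eigenvalue of A (i.e., has algebraic multiplicity one). -/
open Matrix

/-!
Write `M = A - λ • 1`. Nonsingularity of the bordered matrix forbids a nonzero `x` with `M x = 0`
and `uᵀ x = 0` (test `J` against `(x, 0)`), and a nonzero `w` with `wᵀ M = 0` and `wᵀ u = 0`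
(test `Jᵀ` against `(w, 0)`). The first shows `ker M = span {u}`; the second shows that a left null
vector `w` pairs nontrivially with `u`, so `M² x = 0` forces `M x = a • u` with
`0 = wᵀ M x = a (wᵀ u)`, i.e. `ker M² = ker M`. Hence the generalized eigenspace of `λ` is the
line through `u`, and its dimension is the algebraic multiplicity of `λ`.
-/

namespace Module.End

variable {K V : Type*} [Field K] [AddCommGroup V] [Module K V]

theorem maxGenEigenspace_eq_eigenspace_of_ker_sq_le {f : End K V} {μ : K}
    (h : LinearMap.ker ((f - μ • 1) ^ 2) ≤ LinearMap.ker (f - μ • 1)) :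
    f.maxGenEigenspace μ = f.eigenspace μ := by
  set g := f - μ • 1
  have hstable : LinearMap.ker (g ^ 1) = LinearMap.ker (g ^ 2) := by
    refine le_antisymm ?_ (by rwa [pow_one])
    rw [pow_one, pow_two, mul_eq_comp]
    exact LinearMap.ker_le_ker_comp g g
  refine le_antisymm (fun x hx => ?_) (f.genEigenspace_le_maximal μ 1)
  obtain ⟨k, hk⟩ := (f.mem_maxGenEigenspace μ x).mp hx
  have hx' : x ∈ LinearMap.ker (g ^ (1 + k)) := by
    rw [LinearMap.mem_ker, pow_add, mul_apply, hk, map_zero]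
  rwa [← ker_pow_constant hstable k, pow_one, ← eigenspace_def] at hx'

end Module.End

namespace Matrix

variable {K : Type*} [Field K]

section Bordered

variable {m o : Type*} [Fintype m] [Fintype o] [DecidableEq m] [DecidableEq o]
  {A : Matrix m m K} {B : Matrix m o K} {C : Matrix o m K} {D : Matrix o o K}

theorem eq_zero_of_mulVec_eq_zero_of_det_fromBlocks_ne_zero (h : (fromBlocks A B C D).det ≠ 0)
    {x : m → K} (hA : A *ᵥ x = 0) (hC : C *ᵥ x = 0) : x = 0 := by
  by_contra hx
  refine h (exists_mulVec_eq_zero_iff.mp ⟨Sum.elim x 0, fun h0 => hx ?_, ?_⟩)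
  · exact funext fun i => congrFun h0 (Sum.inl i)
  · simp [fromBlocks_mulVec, hA, hC]

theorem eq_zero_of_vecMul_eq_zero_of_det_fromBlocks_ne_zero (h : (fromBlocks A B C D).det ≠ 0)
    {w : m → K} (hA : w ᵥ* A = 0) (hB : w ᵥ* B = 0) : w = 0 := by
  by_contra hw
  refine h (exists_vecMul_eq_zero_iff.mp ⟨Sum.elim w 0, fun h0 => hw ?_, ?_⟩)
  · exact funext fun i => congrFun h0 (Sum.inl i)
  · simp [vecMul_fromBlocks, hA, hB]

end Bordered

variable {n : Type*} [Fintype n] [DecidableEq n] {M : Matrix n n K} {u : n → K}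

theorem ker_toLin'_eq_span_singleton (hMu : M *ᵥ u = 0) (hu : u ≠ 0) {c : n → K}
    (hc : ∀ x, M *ᵥ x = 0 → c ⬝ᵥ x = 0 → x = 0) :
    LinearMap.ker M.toLin' = K ∙ u := by
  have hcu : c ⬝ᵥ u ≠ 0 := fun h => hu (hc u hMu h)
  refine le_antisymm (fun x hx => ?_) ((Submodule.span_singleton_le_iff_mem _ _).mpr hMu)
  rw [LinearMap.mem_ker, toLin'_apply] at hx
  have hproj : x - (c ⬝ᵥ x / c ⬝ᵥ u) • u = 0 :=
    hc _ (by simp [mulVec_sub, mulVec_smul, hx, hMu]) (by simp [dotProduct_sub, hcu])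
  exact Submodule.mem_span_singleton.mpr ⟨_, (sub_eq_zero.mp hproj).symm⟩

theorem ker_toLin'_sq_le_ker (hMu : M *ᵥ u = 0) (hu : u ≠ 0)
    (hker : LinearMap.ker M.toLin' = K ∙ u) (hw : ∀ w, w ᵥ* M = 0 → w ⬝ᵥ u = 0 → w = 0) :
    LinearMap.ker (M.toLin' ^ 2) ≤ LinearMap.ker M.toLin' := by
  obtain ⟨w, hw0, hwM⟩ :=
    exists_vecMul_eq_zero_iff.mpr (exists_mulVec_eq_zero_iff.mp ⟨u, hu, hMu⟩)
  have hwu : w ⬝ᵥ u ≠ 0 := fun h => hw0 (hw w hwM h)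
  intro x hx
  have hMx : M *ᵥ x ∈ K ∙ u := by
    rw [← hker]
    simpa [pow_two, mulVec_mulVec] using hx
  obtain ⟨a, ha⟩ := Submodule.mem_span_singleton.mp hMx
  have hau : a * (w ⬝ᵥ u) = 0 := by
    rw [← smul_eq_mul, ← dotProduct_smul, ha, dotProduct_mulVec, hwM, zero_dotProduct]
  simp [← ha, (mul_eq_zero.mp hau).resolve_right hwu]

theorem rootMultiplicity_charpoly_eq_one {A : Matrix n n K} {μ : K} (hAu : A *ᵥ u = μ • u)
    (hu : u ≠ 0) {c : n → K} (hright : ∀ x, (A - μ • 1) *ᵥ x = 0 → c ⬝ᵥ x = 0 → x = 0)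
    (hleft : ∀ w, w ᵥ* (A - μ • 1) = 0 → w ⬝ᵥ u = 0 → w = 0) :
    A.charpoly.rootMultiplicity μ = 1 := by
  have hMu : (A - μ • 1) *ᵥ u = 0 := by simp [sub_mulVec, smul_mulVec, hAu]
  have hker := ker_toLin'_eq_span_singleton hMu hu hright
  have hlin : A.toLin' - μ • 1 = (A - μ • 1).toLin' := by
    simp [map_sub, map_smul, Module.End.one_eq_id]
  rw [← charpoly_toLin', ← LinearMap.finrank_maxGenEigenspace_eq,
    Module.End.maxGenEigenspace_eq_eigenspace_of_ker_sq_le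
      (by rw [hlin]; exact ker_toLin'_sq_le_ker hMu hu hker hleft),
    Module.End.eigenspace_def, hlin, hker, finrank_span_singleton hu]

end Matrix

/-- If the bordered matrix `J(u,λ) = [[A−λI, −u],[−2uᵀ, 0]]` is nonsingular for a real unit
eigenpair `(λ,u)` of `A`, then `λ` is a simple eigenvalue of `A`. -/
theorem simple_of_bordered_nonsingular {n : ℕ}
    (A : Matrix (Fin n) (Fin n) ℝ) (lam : ℝ) (u : Fin n → ℝ)
    (heig : A *ᵥ u = lam • u) (hnorm : u ⬝ᵥ u = 1)
    (hJ : (Matrix.fromBlocks (A - lam • 1)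
        (Matrix.of fun i (_ : Fin 1) => -u i)
        (Matrix.of fun (_ : Fin 1) j => -2 * u j)
        (0 : Matrix (Fin 1) (Fin 1) ℝ)).det ≠ 0) :
    Polynomial.rootMultiplicity lam A.charpoly = 1 := by
  have hu : u ≠ 0 := by rintro rfl; simp at hnorm
  refine rootMultiplicity_charpoly_eq_one heig hu (c := u)
    (fun x hx hux => ?_) (fun w hw hwu => ?_)
  · refine eq_zero_of_mulVec_eq_zero_of_det_fromBlocks_ne_zero hJ hx ?_
    change replicateRow (Fin 1) ((-2 : ℝ) • u) *ᵥ x = 0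
    rw [replicateRow_mulVec_eq_const, smul_dotProduct, hux, smul_zero]
    rfl
  · refine eq_zero_of_vecMul_eq_zero_of_det_fromBlocks_ne_zero hJ hw ?_
    change w ᵥ* replicateCol (Fin 1) (-u) = 0
    rw [mulVec_replicateCol_eq_const, dotProduct_neg, hwu, neg_zero]
    rfl
end

section
/- Let A be an n×n real matrix with real eigenpair (λ, u), Au = λu, |u| = 1. If λ is not a simple eigenvalue of A, then the bordered matrix J(u,λ) = [[A−λI, −u],[−2uᵀ, 0]] is singular. -/
/-!
If `J(u,λ)` is invertible, then `(A - λ)x = t u` and `uᵀx = 0` force `x = 0` and `t = 0`.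
Splitting off the `u`-component of `x`, this says that `(A - λ)x ∈ span u` happens only when
`(A - λ)x = 0` and `x ∈ span u`. By induction on `k`, every `x` with `(A - λ)ᵏ x = 0` then lies
in `span u`, so the maximal generalized eigenspace of `λ`, whose dimension is the algebraic
multiplicity, is the line `span u`.
-/

open Matrix Module

namespace Module.End

variable {K V : Type*} [Field K] [AddCommGroup V] [Module K V]

/-- Injectivity of the bordered operator `(x, t) ↦ ((φ - μ) x - t • u, ℓ x)`. -/
def BorderedInjective (φ : End K V) (μ : K) (u : V) (ℓ : V →ₗ[K] K) : Prop :=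
  ∀ (x : V) (t : K), (φ - μ • 1) x = t • u → ℓ x = 0 → x = 0 ∧ t = 0

namespace BorderedInjective

variable {φ : End K V} {μ : K} {u : V} {ℓ : V →ₗ[K] K}

theorem ne_zero (h : BorderedInjective φ μ u ℓ) : u ≠ 0 := by
  rintro rfl
  exact one_ne_zero (h 0 1 (by simp) (map_zero ℓ)).2

theorem apply_ne_zero (h : BorderedInjective φ μ u ℓ) (hu : (φ - μ • 1) u = 0) : ℓ u ≠ 0 :=
  fun hℓ => h.ne_zero (h u 0 (by rw [hu, zero_smul]) hℓ).1

theorem eq_zero_and_mem_span (h : BorderedInjective φ μ u ℓ) (hu : (φ - μ • 1) u = 0)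
    {x : V} {t : K} (hx : (φ - μ • 1) x = t • u) : t = 0 ∧ x ∈ K ∙ u := by
  set c := ℓ x / ℓ u
  have hℓ : ℓ (x - c • u) = 0 := by
    rw [map_sub, map_smul, smul_eq_mul, div_mul_cancel₀ _ (h.apply_ne_zero hu), sub_self]
  have hφ : (φ - μ • 1) (x - c • u) = t • u := by
    rw [map_sub, map_smul, hu, hx, smul_zero, sub_zero]
  obtain ⟨hy, ht⟩ := h _ _ hφ hℓ
  refine ⟨ht, ?_⟩
  rw [sub_eq_zero.mp hy]
  exact Submodule.smul_mem _ _ (Submodule.mem_span_singleton_self u)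

theorem maxGenEigenspace_eq (h : BorderedInjective φ μ u ℓ) (hu : (φ - μ • 1) u = 0) :
    φ.maxGenEigenspace μ = K ∙ u := by
  refine le_antisymm (fun x hx => ?_) ?_
  · obtain ⟨k, hk⟩ := (mem_maxGenEigenspace φ μ x).mp hx
    induction k generalizing x with
    | zero =>
      rw [pow_zero, one_apply] at hk
      exact hk ▸ Submodule.zero_mem _
    | succ k ih =>
      rw [pow_succ, mul_apply] at hk
      obtain ⟨c, hc⟩ := Submodule.mem_span_singleton.mp
        (ih _ ((mem_maxGenEigenspace φ μ _).mpr ⟨k, hk⟩) hk)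
      exact (h.eq_zero_and_mem_span hu hc.symm).2
  · rw [Submodule.span_singleton_le_iff_mem, mem_maxGenEigenspace]
    exact ⟨1, by rwa [pow_one]⟩

theorem rootMultiplicity_charpoly_eq_one [FiniteDimensional K V]
    (h : BorderedInjective φ μ u ℓ) (hu : (φ - μ • 1) u = 0) :
    φ.charpoly.rootMultiplicity μ = 1 := by
  rw [← LinearMap.finrank_maxGenEigenspace_eq, h.maxGenEigenspace_eq hu,
    finrank_span_singleton h.ne_zero]

end BorderedInjective

end Module.End

open Module.End

variable {K ι : Type*} [Field K] [Fintype ι]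

def borderedMatrix (B : Matrix ι ι K) (u c : ι → K) : Matrix (ι ⊕ Fin 1) (ι ⊕ Fin 1) K :=
  fromBlocks B (of fun i (_ : Fin 1) => -u i) (of fun (_ : Fin 1) j => c j) 0

theorem borderedMatrix_mulVec_sumElim (B : Matrix ι ι K) (u c x : ι → K) (t : K) :
    borderedMatrix B u c *ᵥ Sum.elim x (fun _ => t) =
      Sum.elim (B *ᵥ x - t • u) fun _ => c ⬝ᵥ x := by
  ext (i | i) <;> simp [borderedMatrix, mulVec, dotProduct, sub_eq_add_neg, mul_comm]

theorem borderedInjective_of_det_ne_zero [DecidableEq ι] {A : Matrix ι ι K} {μ : K} {u c : ι → K}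
    (hdet : (borderedMatrix (A - μ • 1) u c).det ≠ 0) :
    BorderedInjective (toLin' A) μ u (dotProductBilin K K c) := by
  intro x t hx hc
  have hker : borderedMatrix (A - μ • 1) u c *ᵥ Sum.elim x (fun _ => t) = 0 := by
    have hx' : (A - μ • 1) *ᵥ x = t • u := by
      simpa [sub_mulVec, smul_mulVec] using hx
    rw [borderedMatrix_mulVec_sumElim, hx', sub_self, ← dotProductBilin_apply_apply K K, hc]
    ext (i | i) <;> rfl
  by_contra hne
  refine hdet (exists_mulVec_eq_zero_iff.mp ⟨_, fun h0 => hne ?_, hker⟩)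
  exact ⟨funext fun i => congrFun h0 (.inl i), congrFun h0 (.inr 0)⟩

theorem bordered_singular_of_not_simple_general {n : ℕ}
    (A : Matrix (Fin n) (Fin n) ℝ) (lam : ℝ) (u : Fin n → ℝ)
    (heig : A *ᵥ u = lam • u)
    (hns : Polynomial.rootMultiplicity lam A.charpoly ≠ 1) :
    (Matrix.fromBlocks (A - lam • 1)
        (Matrix.of fun i (_ : Fin 1) => -u i)
        (Matrix.of fun (_ : Fin 1) j => -2 * u j)
        (0 : Matrix (Fin 1) (Fin 1) ℝ)).det = 0 := by
  by_contra hdet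
  have hJ := borderedInjective_of_det_ne_zero (c := fun j => -2 * u j) hdet
  refine hns ?_
  rw [← charpoly_toLin']
  exact hJ.rootMultiplicity_charpoly_eq_one (by simp [heig])

/-- If `λ` is not a simple eigenvalue of `A` (real unit eigenpair `(λ,u)`), then the bordered
matrix `J(u,λ) = [[A−λI, −u],[−2uᵀ, 0]]` is singular. -/
theorem bordered_singular_of_not_simple {n : ℕ}
    (A : Matrix (Fin n) (Fin n) ℝ) (lam : ℝ) (u : Fin n → ℝ)
    (heig : A *ᵥ u = lam • u) (hnorm : u ⬝ᵥ u = 1)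
    (hns : Polynomial.rootMultiplicity lam A.charpoly ≠ 1) :
    (Matrix.fromBlocks (A - lam • 1)
        (Matrix.of fun i (_ : Fin 1) => -u i)
        (Matrix.of fun (_ : Fin 1) j => -2 * u j)
        (0 : Matrix (Fin 1) (Fin 1) ℝ)).det = 0 :=
  bordered_singular_of_not_simple_general A lam u heig hns
end
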